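/- For indices i, j with j ≤ i, the real function f(t) = ℓ(μ, B(t), ν), where B(t) is B with its (i,j)-entry replaced by t, is differentiable at t = B_{ij} and its derivative equals 𝟙_{i=j}/B_{ii} − ((ν + D)/(ν + q))·z_i·r_j, where 𝟙_{i=j} is 1 if i = j and 0 otherwise, z_i = (B·r)_i and r_j = y_j − μ_j. -/

import Mathlib

open Matrix

/-- Multivariate t log-likelihood in the Cholesky precision parametrization `Ω = Bᵀ B`:
`ℓ(μ, B, ν) = log Γ((ν+D)/2) - log Γ(ν/2) - (D/2)·log ν - (D/2)·log π + log(det B)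
  - ((ν+D)/2)·log(1 + q/ν)` with `q = ‖B(y-μ)‖²`. -/
noncomputable def tCholLL (D : ℕ) (y μ : Fin D → ℝ)
    (B : Matrix (Fin D) (Fin D) ℝ) (ν : ℝ) : ℝ :=
  Real.log (Real.Gamma ((ν + D) / 2)) - Real.log (Real.Gamma (ν / 2))
    - ((D : ℝ) / 2) * Real.log ν - ((D : ℝ) / 2) * Real.log Real.pi
    + Real.log B.det
    - ((ν + D) / 2) * Real.log (1 + (∑ k, (B.mulVec (y - μ) k) ^ 2) / ν)

/-- The matrix `B` with its `(i,j)`-entry replaced by `t`. -/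
def updEntry {D : ℕ} (B : Matrix (Fin D) (Fin D) ℝ) (i j : Fin D) (t : ℝ) :
    Matrix (Fin D) (Fin D) ℝ :=
  Matrix.of fun k l => if k = i ∧ l = j then t else B k l

/-! Only two terms of `ℓ` depend on the entry `t = B_{ij}`. Since `j ≤ i`, `updEntry B i j t`
stays lower triangular, so its determinant is the product of its diagonal: it is `t` times a
positive constant when `i = j` and does not depend on `t` otherwise. The vector `B(t)(y - μ)`
depends on `t` only through its `i`-th coordinate, which has slope `r_j`, so
`q(t) = ‖B(t) r‖²` has derivative `2 z_i r_j`, and the chain rule through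
`log (1 + q/ν)` gives the second term. -/

namespace updEntry

variable {D : ℕ} (B : Matrix (Fin D) (Fin D) ℝ) (i j : Fin D)

theorem eq_self : updEntry B i j (B i j) = B := by
  ext k l
  by_cases h : k = i ∧ l = j
  · obtain ⟨rfl, rfl⟩ := h
    simp [updEntry]
  · simp [updEntry, h]

theorem isLowerTriangular {B : Matrix (Fin D) (Fin D) ℝ} (hB : B.IsLowerTriangular)
    {i j : Fin D} (hji : j ≤ i) (t : ℝ) : (updEntry B i j t).IsLowerTriangular := by
  intro k l (hkl : k < l)
  have hne : ¬(k = i ∧ l = j) := by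
    rintro ⟨rfl, rfl⟩
    exact hji.not_gt hkl
  simp only [updEntry, of_apply, if_neg hne]
  exact hB hkl

theorem det_of_ne {B : Matrix (Fin D) (Fin D) ℝ} (hB : B.IsLowerTriangular)
    {i j : Fin D} (hji : j ≤ i) (hij : i ≠ j) (t : ℝ) : (updEntry B i j t).det = B.det := by
  rw [det_of_isLowerTriangular _ (isLowerTriangular hB hji t), det_of_isLowerTriangular _ hB]
  refine Finset.prod_congr rfl fun k _ => ?_
  have hne : ¬(k = i ∧ k = j) := fun h => hij (h.1.symm.trans h.2)
  simp only [updEntry, of_apply, if_neg hne]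

theorem det_self {B : Matrix (Fin D) (Fin D) ℝ} (hB : B.IsLowerTriangular) (i : Fin D)
    (t : ℝ) : (updEntry B i i t).det = t * ∏ k ∈ Finset.univ.erase i, B k k := by
  rw [det_of_isLowerTriangular _ (isLowerTriangular hB le_rfl t),
    ← Finset.mul_prod_erase _ _ (Finset.mem_univ i)]
  congr 1
  · simp [updEntry]
  · refine Finset.prod_congr rfl fun k hk => ?_
    simp [updEntry, Finset.ne_of_mem_erase hk]

theorem hasDerivAt_apply (k l : Fin D) (t : ℝ) :
    HasDerivAt (fun s => updEntry B i j s k l) (if k = i ∧ l = j then 1 else 0) t := by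
  by_cases h : k = i ∧ l = j
  · simp only [updEntry, of_apply, if_pos h]
    exact hasDerivAt_id' t
  · simp only [updEntry, of_apply, if_neg h]
    exact hasDerivAt_const t (B k l)

theorem hasDerivAt_mulVec_apply (r : Fin D → ℝ) (k : Fin D) (t : ℝ) :
    HasDerivAt (fun s => (updEntry B i j s *ᵥ r) k) (if k = i then r j else 0) t := by
  have h := HasDerivAt.fun_sum fun l (_ : l ∈ Finset.univ) =>
    (hasDerivAt_apply B i j k l t).mul_const (r l)
  refine h.congr_deriv ?_
  by_cases hk : k = i <;> simp [hk]

theorem hasDerivAt_sum_sq_mulVec (r : Fin D → ℝ) :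
    HasDerivAt (fun s => ∑ k, (updEntry B i j s *ᵥ r) k ^ 2)
      (2 * (B *ᵥ r) i * r j) (B i j) := by
  have h := HasDerivAt.fun_sum fun k (_ : k ∈ Finset.univ) =>
    (hasDerivAt_mulVec_apply B i j r k (B i j)).pow 2
  refine h.congr_deriv ?_
  simp only [eq_self, mul_ite, mul_zero, Finset.sum_ite_eq', Finset.mem_univ, if_true]
  ring

theorem hasDerivAt_log_det {B : Matrix (Fin D) (Fin D) ℝ} (hB : B.IsLowerTriangular)
    (hdiag : ∀ k, B k k ≠ 0) {i j : Fin D} (hji : j ≤ i) :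
    HasDerivAt (fun t => Real.log (updEntry B i j t).det)
      (if i = j then (B i i)⁻¹ else 0) (B i j) := by
  by_cases hij : i = j
  · subst hij
    simp only [det_self hB, if_true]
    set c := ∏ k ∈ Finset.univ.erase i, B k k
    have hc : c ≠ 0 := Finset.prod_ne_zero_iff.mpr fun k _ => hdiag k
    refine (((hasDerivAt_id' (B i i)).mul_const c).log (mul_ne_zero (hdiag i) hc)).congr_deriv ?_
    field_simp [hdiag i]
  · simp only [det_of_ne hB hji hij, if_neg hij]
    exact hasDerivAt_const _ _

end updEntry

theorem tChol_deriv_B_general (D : ℕ) (y μ : Fin D → ℝ) (ν : ℝ) (hν : 0 < ν)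
    (B : Matrix (Fin D) (Fin D) ℝ)
    (hLT : ∀ k l : Fin D, k < l → B k l = 0)
    (hdiag : ∀ k, 0 < B k k) (i j : Fin D) (hji : j ≤ i) :
    HasDerivAt (fun t : ℝ => tCholLL D y μ (updEntry B i j t) ν)
      ((if i = j then (B i i)⁻¹ else 0)
        - (ν + D) / (ν + ∑ k, (B.mulVec (y - μ) k) ^ 2) *
            (B.mulVec (y - μ) i) * (y j - μ j))
      (B i j) := by
  have hB : B.IsLowerTriangular := fun k l => hLT k l
  have hlogdet := updEntry.hasDerivAt_log_det hB (fun k => (hdiag k).ne') hji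
  have hquad := ((updEntry.hasDerivAt_sum_sq_mulVec B i j (y - μ)).div_const ν).const_add 1
  have hpos : 0 < 1 + (∑ k, (updEntry B i j (B i j) *ᵥ (y - μ)) k ^ 2) / ν := by
    rw [updEntry.eq_self]
    positivity
  refine ((hlogdet.const_add _).sub ((hquad.log hpos.ne').const_mul ((ν + D) / 2))).congr_deriv ?_
  rw [updEntry.eq_self, Pi.sub_apply]
  field_simp

/-- First partial derivative of the multivariate t log-likelihood with respect to the
entry `B_{ij}` (with `j ≤ i`): it equals
`𝟙_{i=j}/B_{ii} - ((ν + D)/(ν + q))·z_i·r_j` with `z = B(y-μ)`, `r = y - μ` and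
`q = ‖B(y-μ)‖²`. -/
theorem tChol_deriv_B (D : ℕ) (hD : 1 ≤ D) (y μ : Fin D → ℝ) (ν : ℝ) (hν : 0 < ν)
    (B : Matrix (Fin D) (Fin D) ℝ)
    (hLT : ∀ k l : Fin D, k < l → B k l = 0)
    (hdiag : ∀ k, 0 < B k k) (i j : Fin D) (hji : j ≤ i) :
    HasDerivAt (fun t : ℝ => tCholLL D y μ (updEntry B i j t) ν)
      ((if i = j then (B i i)⁻¹ else 0)
        - (ν + D) / (ν + ∑ k, (B.mulVec (y - μ) k) ^ 2) *
            (B.mulVec (y - μ) i) * (y j - μ j))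
      (B i j) :=
  tChol_deriv_B_general D y μ ν hν B hLT hdiag i j hji
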